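/- arXiv:1212.1785 — 2 statements merged into one kernel-verified Lean document; each statement's English description precedes it below -/
import Mathlib

section
/- Combinatorial mutation is involutive: if Q := mut_w(P, F; {G_h}) is a combinatorial mutation of a lattice polytope P with respect to width vector w and factor F, then mut_{−w}(Q, F; {w_h(P)}) is a well-defined combinatorial mutation of Q and equals P. -/
open Set Pointwise

noncomputable section

def pairing {n : ℕ} (w : Fin n → ℤ) (x : Fin n → ℚ) : ℚ :=
  ∑ i, (w i : ℚ) * x i

def IsLatticePt {n : ℕ} (x : Fin n → ℚ) : Prop := ∀ i, ∃ z : ℤ, x i = (z : ℚ)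

def IsLatticePolytope {n : ℕ} (P : Set (Fin n → ℚ)) : Prop :=
  ∃ S : Finset (Fin n → ℚ), (∀ x ∈ S, IsLatticePt x) ∧ P = convexHull ℚ (S : Set (Fin n → ℚ))

def IsPrimitive {n : ℕ} (w : Fin n → ℤ) : Prop := Finset.univ.gcd w = 1

def wSlice {n : ℕ} (w : Fin n → ℤ) (h : ℤ) (P : Set (Fin n → ℚ)) : Set (Fin n → ℚ) :=
  convexHull ℚ {x | x ∈ P ∧ IsLatticePt x ∧ pairing w x = (h : ℚ)}

def mutation {n : ℕ} (w : Fin n → ℤ) (P F : Set (Fin n → ℚ)) (G : ℤ → Set (Fin n → ℚ)) :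
    Set (Fin n → ℚ) :=
  convexHull ℚ ((⋃ h : ℤ, ⋃ _ : h < 0, G h) ∪
    ⋃ h : ℤ, ⋃ _ : 0 ≤ h, (wSlice w h P + (h : ℚ) • F))

def IsMutData {n : ℕ} (w : Fin n → ℤ) (P F : Set (Fin n → ℚ))
    (G : ℤ → Set (Fin n → ℚ)) : Prop :=
  IsLatticePolytope F ∧ F.Nonempty ∧ (∀ x ∈ F, pairing w x = 0) ∧
  ∀ h : ℤ, h < 0 →
    (G h = ∅ ∨ IsLatticePolytope (G h)) ∧
    {v | v ∈ P.extremePoints ℚ ∧ pairing w v = (h : ℚ)} ⊆ G h + (-(h : ℚ)) • F ∧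
    G h + (-(h : ℚ)) • F ⊆ wSlice w h P

def dpair {n : ℕ} (u v : Fin n → ℚ) : ℚ := ∑ i, u i * v i

def dualP {n : ℕ} (P : Set (Fin n → ℚ)) : Set (Fin n → ℚ) := {u | ∀ v ∈ P, -1 ≤ dpair u v}

/-!
Write `Q = mut_w(P, F; {G_h})`. Every generator of `Q` lies in the convex set of points
`q = x + y` with `y ∈ b • F`, `x + a • F ⊆ P` and `⟨w, q⟩ = b - a`; hence a point `q ∈ Q` of
height `-h ≤ 0` satisfies `q + h • F ⊆ P`, which gives `mut_{-w}(Q, F; {w_{-h}(P)}) ⊆ P`.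
Conversely `P` is the convex hull of its vertices, and a vertex of height `k` lies in
`G_k + (-k) • F ⊆ w_k(Q) + (-k) • F` if `k < 0`, in `w_0(Q)` if `k = 0`, and in the slice
`w_k(P)` that serves as the new `G_{-k}` if `k > 0`. The new data is admissible because a vertex
of `Q` of negative `(-w)`-height is a vertex of a generator `w_h(P) + h • F` with `h > 0`.
-/

section KreinMilman

-- Mathlib's Krein–Milman theorem needs a topological real vector space; over `ℚ` we only need it
-- for polytopes, where it is a finite induction.

variable {𝕜 E : Type*} [Field 𝕜] [LinearOrder 𝕜] [IsStrictOrderedRing 𝕜] [AddCommGroup E]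
  [Module 𝕜 E]

theorem mem_extremePoints_convexHull_insert {x : E} {s : Set E} (hx : x ∉ convexHull 𝕜 s) :
    x ∈ (convexHull 𝕜 (insert x s)).extremePoints 𝕜 := by
  rcases s.eq_empty_or_nonempty with rfl | hs
  · simp [extremePoints_singleton]
  rw [mem_extremePoints_iff_left]
  refine ⟨subset_convexHull 𝕜 _ (mem_insert x s), ?_⟩
  simp only [convexHull_insert hs, convexJoin_singleton_left, mem_iUnion]
  rintro x₁ ⟨y₁, hy₁, α₁, β₁, hα₁, hβ₁, hαβ₁, rfl⟩ x₂ ⟨y₂, hy₂, α₂, β₂, hα₂, hβ₂, hαβ₂, rfl⟩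
    ⟨a, b, ha, hb, hab, hx'⟩
  have hc : (a * β₁ + b * β₂) • x = (a * β₁) • y₁ + (b * β₂) • y₂ := by
    linear_combination (norm := module) -hx' + (a * hαβ₁ + b * hαβ₂ + hab) • x
  have h₁ : 0 ≤ a * β₁ := mul_nonneg ha.le hβ₁
  have h₂ : 0 ≤ b * β₂ := mul_nonneg hb.le hβ₂
  rcases (add_nonneg h₁ h₂).eq_or_lt with hc0 | hcpos
  · obtain rfl : β₁ = 0 := by nlinarith
    obtain rfl : α₁ = 1 := by linarith
    simp
  · refine absurd ?_ hx
    have hx_eq : x = ((a * β₁) / (a * β₁ + b * β₂)) • y₁ + ((b * β₂) / (a * β₁ + b * β₂)) • y₂ := by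
      apply smul_right_injective E hcpos.ne'
      simp only [smul_add, smul_smul, mul_div_cancel₀ _ hcpos.ne', hc]
    rw [hx_eq]
    exact convex_convexHull 𝕜 s hy₁ hy₂ (div_nonneg h₁ hcpos.le) (div_nonneg h₂ hcpos.le)
      (by rw [← add_div, div_self hcpos.ne'])

theorem Finset.convexHull_extremePoints_convexHull (S : Finset E) :
    convexHull 𝕜 ((convexHull 𝕜 (S : Set E)).extremePoints 𝕜) = convexHull 𝕜 S := by
  classical
  refine (convexHull_min extremePoints_subset (convex_convexHull 𝕜 _)).antisymm ?_
  induction S using Finset.strongInduction with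
  | _ S ih =>
    by_cases hS : ∃ x ∈ S, x ∈ convexHull 𝕜 (S.erase x : Set E)
    · obtain ⟨x, hxS, hx⟩ := hS
      have hS : convexHull 𝕜 (S : Set E) = convexHull 𝕜 (S.erase x : Set E) := by
        refine (convexHull_min ?_ (convex_convexHull 𝕜 _)).antisymm (convexHull_mono ?_)
        · intro y hy
          rcases eq_or_ne y x with rfl | hne
          · exact hx
          · exact subset_convexHull 𝕜 _ (Finset.mem_erase.2 ⟨hne, hy⟩)
        · exact Finset.coe_subset.2 (S.erase_subset x)
      rw [hS]
      exact ih _ (Finset.erase_ssubset hxS)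
    · push Not at hS
      refine convexHull_mono fun x hx => ?_
      have := mem_extremePoints_convexHull_insert (hS x hx)
      rwa [← Finset.coe_insert, Finset.insert_erase hx] at this

end KreinMilman

section

variable {n : ℕ}

section Pairing

lemma pairing_add (w : Fin n → ℤ) (x y : Fin n → ℚ) :
    pairing w (x + y) = pairing w x + pairing w y := by
  simp [pairing, mul_add, Finset.sum_add_distrib]

lemma pairing_smul (w : Fin n → ℤ) (c : ℚ) (x : Fin n → ℚ) :
    pairing w (c • x) = c * pairing w x := by
  simp only [pairing, Finset.mul_sum, Pi.smul_apply, smul_eq_mul]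
  exact Finset.sum_congr rfl fun i _ => by ring

lemma pairing_neg_left (w : Fin n → ℤ) (x : Fin n → ℚ) : pairing (-w) x = -pairing w x := by
  simp [pairing, ← Finset.sum_neg_distrib]

lemma pairing_add_smul_of_pairing_eq_zero {w : Fin n → ℤ} {f : Fin n → ℚ} (hf : pairing w f = 0)
    (x : Fin n → ℚ) (c : ℚ) : pairing w (x + c • f) = pairing w x := by
  rw [pairing_add, pairing_smul, hf, mul_zero, add_zero]

lemma convex_setOf_pairing_eq (w : Fin n → ℤ) (c : ℚ) :
    Convex ℚ {x : Fin n → ℚ | pairing w x = c} :=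
  convex_hyperplane ⟨pairing_add w, pairing_smul w⟩ c

end Pairing

section Lattice

lemma IsLatticePt.add {x y : Fin n → ℚ} (hx : IsLatticePt x) (hy : IsLatticePt y) :
    IsLatticePt (x + y) := fun i => by
  obtain ⟨a, ha⟩ := hx i
  obtain ⟨b, hb⟩ := hy i
  exact ⟨a + b, by simp [ha, hb]⟩

lemma IsLatticePt.intCast_smul {x : Fin n → ℚ} (hx : IsLatticePt x) (k : ℤ) :
    IsLatticePt ((k : ℚ) • x) := fun i => by
  obtain ⟨a, ha⟩ := hx i
  exact ⟨k * a, by simp [ha]⟩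

lemma IsLatticePt.exists_pairing_eq (w : Fin n → ℤ) {x : Fin n → ℚ} (hx : IsLatticePt x) :
    ∃ k : ℤ, pairing w x = k := by
  choose z hz using hx
  exact ⟨∑ i, w i * z i, by simp [pairing, hz]⟩

lemma finite_setOf_mem_Icc_isLatticePt (lo hi : Fin n → ℚ) :
    {x | x ∈ Icc lo hi ∧ IsLatticePt x}.Finite := by
  refine ((finite_Icc (fun i => ⌈lo i⌉) fun i => ⌊hi i⌋).image fun z i => (z i : ℚ)).subset ?_
  rintro x ⟨⟨hlo, hhi⟩, hx⟩
  choose z hz using hx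
  exact ⟨z, ⟨fun i => Int.ceil_le.2 (hz i ▸ hlo i), fun i => Int.le_floor.2 (hz i ▸ hhi i)⟩,
    funext fun i => (hz i).symm⟩

lemma IsLatticePolytope.convex {P : Set (Fin n → ℚ)} (hP : IsLatticePolytope P) :
    Convex ℚ P := by
  obtain ⟨S, -, rfl⟩ := hP
  exact convex_convexHull ℚ _

lemma IsLatticePolytope.convexHull_extremePoints {P : Set (Fin n → ℚ)}
    (hP : IsLatticePolytope P) : convexHull ℚ (P.extremePoints ℚ) = P := by
  obtain ⟨S, -, rfl⟩ := hP
  exact S.convexHull_extremePoints_convexHull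

lemma IsLatticePolytope.isLatticePt_of_mem_extremePoints {P : Set (Fin n → ℚ)}
    (hP : IsLatticePolytope P) {v : Fin n → ℚ} (hv : v ∈ P.extremePoints ℚ) : IsLatticePt v := by
  obtain ⟨S, hS, rfl⟩ := hP
  exact hS v (extremePoints_convexHull_subset hv)

lemma IsLatticePolytope.finite_setOf_isLatticePt {P : Set (Fin n → ℚ)}
    (hP : IsLatticePolytope P) : {x | x ∈ P ∧ IsLatticePt x}.Finite := by
  obtain ⟨S, -, rfl⟩ := hP
  obtain ⟨lo, hlo⟩ := S.bddBelow
  obtain ⟨hi, hhi⟩ := S.bddAbove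
  have hbox : convexHull ℚ (S : Set (Fin n → ℚ)) ⊆ Icc lo hi :=
    convexHull_min (fun x hx => ⟨hlo hx, hhi hx⟩) (convex_Icc lo hi)
  exact (finite_setOf_mem_Icc_isLatticePt lo hi).subset fun x hx => ⟨hbox hx.1, hx.2⟩

end Lattice

section Slice

variable {w : Fin n → ℤ} {h : ℤ} {P : Set (Fin n → ℚ)}

lemma pairing_of_mem_wSlice {x : Fin n → ℚ} (hx : x ∈ wSlice w h P) : pairing w x = h :=
  convexHull_min (fun _ hy => hy.2.2) (convex_setOf_pairing_eq w _) hx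

lemma wSlice_subset (hP : Convex ℚ P) : wSlice w h P ⊆ P :=
  convexHull_min (fun _ hy => hy.1) hP

lemma wSlice_neg : wSlice (-w) h P = wSlice w (-h) P := by
  simp only [wSlice, pairing_neg_left, Int.cast_neg, neg_eq_iff_eq_neg]

lemma subset_wSlice {S : Set (Fin n → ℚ)} (hS : IsLatticePolytope S) (hSP : S ⊆ P)
    (hSw : ∀ x ∈ S, pairing w x = h) : S ⊆ wSlice w h P := by
  obtain ⟨T, hT, rfl⟩ := hS
  exact convexHull_mono fun x hx =>
    ⟨hSP (subset_convexHull ℚ _ hx), hT x hx, hSw x (subset_convexHull ℚ _ hx)⟩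

lemma IsLatticePolytope.wSlice (hP : IsLatticePolytope P) : IsLatticePolytope (wSlice w h P) := by
  have hfin : {x | x ∈ P ∧ IsLatticePt x ∧ pairing w x = h}.Finite :=
    hP.finite_setOf_isLatticePt.subset fun x hx => ⟨hx.1, hx.2.1⟩
  exact ⟨hfin.toFinset, fun x hx => ((Finite.mem_toFinset _).1 hx).2.1, by
    rw [_root_.wSlice, Finite.coe_toFinset]⟩

end Slice

section Mutation

variable {w : Fin n → ℤ} {P F : Set (Fin n → ℚ)} {G : ℤ → Set (Fin n → ℚ)}

lemma subset_mutation_of_neg {k : ℤ} (hk : k < 0) : G k ⊆ mutation w P F G :=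
  fun _ hx => subset_convexHull ℚ _ (Or.inl (mem_iUnion₂.2 ⟨k, hk, hx⟩))

lemma wSlice_add_smul_subset_mutation {k : ℤ} (hk : 0 ≤ k) :
    wSlice w k P + (k : ℚ) • F ⊆ mutation w P F G :=
  fun _ hx => subset_convexHull ℚ _ (Or.inr (mem_iUnion₂.2 ⟨k, hk, hx⟩))

lemma wSlice_zero_subset_mutation (hF : F.Nonempty) : wSlice w 0 P ⊆ mutation w P F G := by
  simpa [zero_smul_set hF] using
    wSlice_add_smul_subset_mutation (w := w) (P := P) (F := F) (G := G) le_rfl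

lemma mutation_subset {C : Set (Fin n → ℚ)} (hC : Convex ℚ C) (hneg : ∀ k < 0, G k ⊆ C)
    (hnonneg : ∀ k, 0 ≤ k → wSlice w k P + (k : ℚ) • F ⊆ C) : mutation w P F G ⊆ C :=
  convexHull_min (union_subset (iUnion₂_subset hneg) (iUnion₂_subset hnonneg)) hC

lemma pairing_of_mem_wSlice_add_smul (hF0 : ∀ x ∈ F, pairing w x = 0) {k : ℤ} {x : Fin n → ℚ}
    (hx : x ∈ wSlice w k P + (k : ℚ) • F) : pairing w x = k := by
  obtain ⟨y, hy, _, ⟨f, hf, rfl⟩, rfl⟩ := hx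
  rw [pairing_add_smul_of_pairing_eq_zero (hF0 f hf), pairing_of_mem_wSlice hy]

lemma IsMutData.pairing_eq_of_mem (hd : IsMutData w P F G) {k : ℤ} (hk : k < 0)
    {g : Fin n → ℚ} (hg : g ∈ G k) : pairing w g = k := by
  obtain ⟨-, ⟨f, hf⟩, hF0, hG⟩ := hd
  have := pairing_of_mem_wSlice ((hG k hk).2.2 (add_mem_add hg (smul_mem_smul_set hf)))
  rwa [pairing_add_smul_of_pairing_eq_zero (hF0 f hf)] at this

/-- `q = x + y` with `y ∈ b • F`, `x + a • F ⊆ P` and `⟨w, q⟩ = b - a`: a convex set containing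
every generator of `mut_w(P, F; {G_h})`. -/
def mutationBound (w : Fin n → ℤ) (P F : Set (Fin n → ℚ)) : Set (Fin n → ℚ) :=
  {q | ∃ a b : ℚ, 0 ≤ a ∧ 0 ≤ b ∧ pairing w q = b - a ∧ ∃ y ∈ b • F, ∀ f ∈ F, q - y + a • f ∈ P}

lemma convex_mutationBound (hP : Convex ℚ P) (hF : Convex ℚ F) :
    Convex ℚ (mutationBound w P F) := by
  rintro q₁ ⟨a₁, b₁, ha₁, hb₁, hq₁, _, ⟨f₁, hf₁, rfl⟩, hP₁⟩
    q₂ ⟨a₂, b₂, ha₂, hb₂, hq₂, _, ⟨f₂, hf₂, rfl⟩, hP₂⟩ s t hs ht hst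
  refine ⟨s * a₁ + t * a₂, s * b₁ + t * b₂, by positivity, by positivity, ?_,
    s • b₁ • f₁ + t • b₂ • f₂, ?_, fun f hf => ?_⟩
  · rw [pairing_add, pairing_smul, pairing_smul, hq₁, hq₂]
    ring
  · rw [hF.add_smul (by positivity) (by positivity), smul_smul, smul_smul]
    exact add_mem_add (smul_mem_smul_set hf₁) (smul_mem_smul_set hf₂)
  · convert hP (hP₁ f hf) (hP₂ f hf) hs ht hst using 1
    module

lemma IsMutData.mutation_subset_mutationBound (hd : IsMutData w P F G) (hP : Convex ℚ P) :
    mutation w P F G ⊆ mutationBound w P F := by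
  have ⟨hF, ⟨f₀, hf₀⟩, hF0, hG⟩ := hd
  refine mutation_subset (convex_mutationBound hP hF.convex) (fun k hk g hg => ?_)
    fun k hk q hq => ?_
  · refine ⟨-k, 0, by exact_mod_cast neg_nonneg.2 hk.le, le_rfl,
      by rw [hd.pairing_eq_of_mem hk hg]; ring, 0, ⟨f₀, hf₀, zero_smul _ _⟩, fun f hf => ?_⟩
    rw [sub_zero]
    exact wSlice_subset hP ((hG k hk).2.2 (add_mem_add hg (smul_mem_smul_set hf)))
  · obtain ⟨x, hx, _, ⟨f₁, hf₁, rfl⟩, rfl⟩ := hq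
    refine ⟨0, k, le_rfl, by exact_mod_cast hk, ?_, (k : ℚ) • f₁, smul_mem_smul_set hf₁,
      fun f _ => by simpa using wSlice_subset hP hx⟩
    rw [pairing_add_smul_of_pairing_eq_zero (hF0 f₁ hf₁), pairing_of_mem_wSlice hx, sub_zero]

lemma add_smul_mem_of_mem_mutationBound (hF : Convex ℚ F) {q f : Fin n → ℚ}
    (hq : q ∈ mutationBound w P F) (hq0 : pairing w q ≤ 0) (hf : f ∈ F) :
    q + (-pairing w q) • f ∈ P := by
  obtain ⟨a, b, ha, hb, hqab, _, ⟨f₂, hf₂, rfl⟩, hqP⟩ := hq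
  obtain ⟨f', hf', hf'eq⟩ : ∃ f' ∈ F, a • f' = b • f₂ + (a - b) • f := by
    rcases ha.eq_or_lt with rfl | ha
    · obtain rfl : b = 0 := by linarith
      exact ⟨f, hf, by simp⟩
    · refine ⟨(b / a) • f₂ + ((a - b) / a) • f, hF hf₂ hf (by positivity)
        (div_nonneg (by linarith) ha.le) (by field_simp; ring), ?_⟩
      rw [smul_add, smul_smul, smul_smul, mul_div_cancel₀ _ ha.ne', mul_div_cancel₀ _ ha.ne']
  convert hqP f' hf' using 1
  rw [hf'eq, hqab]
  module

lemma IsMutData.add_smul_mem_of_mem_mutation (hd : IsMutData w P F G) (hP : Convex ℚ P)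
    {q f : Fin n → ℚ} (hq : q ∈ mutation w P F G) (hq0 : pairing w q ≤ 0) (hf : f ∈ F) :
    q + (-pairing w q) • f ∈ P :=
  add_smul_mem_of_mem_mutationBound hd.1.convex (hd.mutation_subset_mutationBound hP hq) hq0 hf

lemma wSlice_add_smul_subset_wSlice_mutation (hF : IsLatticePolytope F)
    (hF0 : ∀ x ∈ F, pairing w x = 0) {k : ℤ} (hk : 0 ≤ k) :
    wSlice w k P + (k : ℚ) • F ⊆ wSlice w k (mutation w P F G) := by
  obtain ⟨S, hS, rfl⟩ := hF
  rw [wSlice, ← convexHull_smul, ← convexHull_add]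
  refine convexHull_mono ?_
  rintro _ ⟨x, hx, _, ⟨f, hf, rfl⟩, rfl⟩
  have hfF : f ∈ convexHull ℚ (S : Set (Fin n → ℚ)) := subset_convexHull ℚ _ hf
  refine ⟨wSlice_add_smul_subset_mutation hk
      (add_mem_add (subset_convexHull ℚ _ hx) (smul_mem_smul_set hfF)),
    hx.2.1.add ((hS f hf).intCast_smul k), ?_⟩
  rw [pairing_add_smul_of_pairing_eq_zero (hF0 f hfF), hx.2.2]

theorem IsMutData.neg (hP : IsLatticePolytope P) (hd : IsMutData w P F G) :
    IsMutData (-w) (mutation w P F G) F (fun h => wSlice w (-h) P) := by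
  have ⟨hF, hFne, hF0, _⟩ := hd
  refine ⟨hF, hFne, fun x hx => by rw [pairing_neg_left, hF0 x hx, neg_zero],
    fun h hh => ⟨Or.inr hP.wSlice, ?_, ?_⟩⟩
  · rintro v ⟨hv, hvh⟩
    rw [pairing_neg_left, neg_eq_iff_eq_neg] at hvh
    rcases extremePoints_convexHull_subset hv with hvG | hvP
    · obtain ⟨k, hk, hvG⟩ := mem_iUnion₂.1 hvG
      have : -h = k := by exact_mod_cast hvh.symm.trans (hd.pairing_eq_of_mem hk hvG)
      omega
    · obtain ⟨k, -, hvk⟩ := mem_iUnion₂.1 hvP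
      obtain rfl : k = -h := by
        exact_mod_cast (pairing_of_mem_wSlice_add_smul hF0 hvk).symm.trans hvh
      simpa using hvk
  · have := wSlice_add_smul_subset_wSlice_mutation (P := P) (G := G) hF hF0 (neg_nonneg.2 hh.le)
    simpa [wSlice_neg] using this

lemma IsMutData.mutation_neg_subset (hd : IsMutData w P F G) (hP : Convex ℚ P) :
    mutation (-w) (mutation w P F G) F (fun h => wSlice w (-h) P) ⊆ P := by
  refine mutation_subset hP (fun k _ => wSlice_subset hP) fun k hk => ?_
  rintro _ ⟨x, hx, _, ⟨f, hf, rfl⟩, rfl⟩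
  rw [wSlice_neg] at hx
  have hxk : pairing w x = -k := by simpa using pairing_of_mem_wSlice hx
  have hk' : (0 : ℚ) ≤ k := by exact_mod_cast hk
  have := hd.add_smul_mem_of_mem_mutation hP (wSlice_subset (convex_convexHull ℚ _) hx)
    (by linarith) hf
  rwa [hxk, neg_neg] at this

lemma IsMutData.subset_mutation_neg (hd : IsMutData w P F G) (hP : IsLatticePolytope P) :
    P ⊆ mutation (-w) (mutation w P F G) F (fun h => wSlice w (-h) P) := by
  refine hP.convexHull_extremePoints.ge.trans
    (convexHull_min (fun v hv => ?_) (convex_convexHull ℚ _))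
  have ⟨_, hFne, _, hG⟩ := hd
  have hvlat := hP.isLatticePt_of_mem_extremePoints hv
  have hvk {k : ℤ} (hk : pairing w v = k) : v ∈ wSlice w k P :=
    subset_convexHull ℚ _ ⟨extremePoints_subset hv, hvlat, hk⟩
  obtain ⟨k, hk⟩ := hvlat.exists_pairing_eq w
  rcases lt_trichotomy k 0 with hk0 | rfl | hk0
  · obtain ⟨g, hg, _, hf, rfl⟩ := (hG k hk0).2.1 ⟨hv, hk⟩
    have hgQ : g ∈ wSlice (-w) (-k) (mutation w P F G) := by
      rw [wSlice_neg, neg_neg]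
      rcases (hG k hk0).1 with hGk | hGk
      · simp [hGk] at hg
      · exact subset_wSlice hGk (subset_mutation_of_neg hk0)
          (fun x hx => hd.pairing_eq_of_mem hk0 hx) hg
    exact wSlice_add_smul_subset_mutation (k := -k) (by omega)
      (by push_cast; exact add_mem_add hgQ hf)
  · refine wSlice_zero_subset_mutation hFne (subset_convexHull ℚ _ ⟨?_, hvlat, ?_⟩)
    · exact wSlice_zero_subset_mutation hFne (hvk hk)
    · simpa [pairing_neg_left] using hk
  · exact subset_mutation_of_neg (G := fun h => wSlice w (-h) P) (neg_lt_zero.2 hk0)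
      (by simpa using hvk hk)

end Mutation

end

theorem mutation_involutive_general {n : ℕ} (w : Fin n → ℤ) (P F : Set (Fin n → ℚ))
    (G : ℤ → Set (Fin n → ℚ)) (hP : IsLatticePolytope P)
    (hdata : IsMutData w P F G) :
    IsMutData (-w) (mutation w P F G) F (fun h => wSlice w (-h) P) ∧
      mutation (-w) (mutation w P F G) F (fun h => wSlice w (-h) P) = P :=
  ⟨hdata.neg hP, (hdata.mutation_neg_subset hP.convex).antisymm (hdata.subset_mutation_neg hP)⟩

/-- Combinatorial mutation is involutive: if `Q = mut_w(P,F;{G_h})` then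
`mut_{-w}(Q,F;{w_h(P)})` is a well-defined combinatorial mutation of `Q` and equals `P`. -/
theorem mutation_involutive {n : ℕ} (w : Fin n → ℤ) (P F : Set (Fin n → ℚ))
    (G : ℤ → Set (Fin n → ℚ)) (hP : IsLatticePolytope P) (hw : IsPrimitive w)
    (hdata : IsMutData w P F G) :
    IsMutData (-w) (mutation w P F G) F (fun h => wSlice w (-h) P) ∧
      mutation (-w) (mutation w P F G) F (fun h => wSlice w (-h) P) = P :=
  mutation_involutive_general w P F G hP hdata
end
end

section
/- Let Q := mut_w(P,F) be a combinatorial mutation of a lattice polytope P with 0 in its interior. Then the piecewise-linear map on the dual space M_ℚ given by u ↦ u − u_min·w, where u_min := min{⟨u, v_F⟩ : v_F a vertex of F}, maps the dual polytope P* bijectively onto the dual polytope Q*. -/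
open Set Pointwise

noncomputable section

/-! ### Auxiliary lemmas -/

lemma isLinearMap_dpair {n : ℕ} (u : Fin n → ℚ) : IsLinearMap ℚ (dpair u) := by
  constructor
  · intro x y
    simp [dpair, mul_add, Finset.sum_add_distrib]
  · intro c x
    simp only [dpair, Pi.smul_apply, smul_eq_mul, Finset.mul_sum]
    exact Finset.sum_congr rfl fun i _ => by ring

lemma isLinearMap_pairing {n : ℕ} (w : Fin n → ℤ) : IsLinearMap ℚ (pairing w) :=
  isLinearMap_dpair (fun i => (w i : ℚ))

lemma pairing_eq_dpair {n : ℕ} (w : Fin n → ℤ) (v : Fin n → ℚ) :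
    pairing w v = dpair (fun i => (w i : ℚ)) v := rfl

lemma dpair_add_smul_right {n : ℕ} (u x f : Fin n → ℚ) (c : ℚ) :
    dpair u (x + c • f) = dpair u x + c * dpair u f := by
  rw [(isLinearMap_dpair u).map_add, (isLinearMap_dpair u).map_smul]; rfl

lemma pairing_add_smul {n : ℕ} (w : Fin n → ℤ) (x f : Fin n → ℚ) (c : ℚ) :
    pairing w (x + c • f) = pairing w x + c * pairing w f := by
  simp only [pairing_eq_dpair]; exact dpair_add_smul_right _ _ _ _

lemma dpair_sub_smul {n : ℕ} (u t v : Fin n → ℚ) (c : ℚ) :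
    dpair (u - c • t) v = dpair u v - c * dpair t v := by
  simp only [dpair, Pi.sub_apply, Pi.smul_apply, smul_eq_mul, sub_mul,
    Finset.sum_sub_distrib, Finset.mul_sum, mul_assoc]

lemma hull_le {n : ℕ} {S : Set (Fin n → ℚ)} {u : Fin n → ℚ} {c : ℚ}
    (h : ∀ x ∈ S, c ≤ dpair u x) {x : Fin n → ℚ} (hx : x ∈ convexHull ℚ S) :
    c ≤ dpair u x :=
  convexHull_min h (convex_halfSpace_ge (isLinearMap_dpair u) c) hx

lemma hull_pairing_eq {n : ℕ} {S : Set (Fin n → ℚ)} {w : Fin n → ℤ} {c : ℚ}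
    (h : ∀ x ∈ S, pairing w x = c) {x : Fin n → ℚ} (hx : x ∈ convexHull ℚ S) :
    pairing w x = c :=
  convexHull_min h (convex_hyperplane (isLinearMap_pairing w) c) hx

lemma mem_convexHull_erase {n : ℕ} {S : Finset (Fin n → ℚ)} {s : Fin n → ℚ} (hs : s ∈ S)
    (hne : s ∉ (convexHull ℚ (S : Set (Fin n → ℚ))).extremePoints ℚ) :
    s ∈ convexHull ℚ ((S.erase s : Finset (Fin n → ℚ)) : Set (Fin n → ℚ)) := by
  classical
  have hsh : s ∈ convexHull ℚ (S : Set (Fin n → ℚ)) := subset_convexHull ℚ _ hs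
  rw [mem_extremePoints] at hne
  push_neg at hne
  obtain ⟨x₁, hx₁, x₂, hx₂, hseg, hx12⟩ := hne hsh
  obtain ⟨a, b, ha, hb, hab, habs⟩ := hseg
  rw [Finset.convexHull_eq] at hx₁ hx₂
  obtain ⟨w₁, hw₁0, hw₁1, hw₁c⟩ := hx₁
  obtain ⟨w₂, hw₂0, hw₂1, hw₂c⟩ := hx₂
  set μ : (Fin n → ℚ) → ℚ := fun t => a * w₁ t + b * w₂ t with hμ
  have hμ0 : ∀ t ∈ S, 0 ≤ μ t := fun t ht =>
    add_nonneg (mul_nonneg ha.le (hw₁0 t ht)) (mul_nonneg hb.le (hw₂0 t ht))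
  have hμ1 : ∑ t ∈ S, μ t = 1 := by
    simp [hμ, Finset.sum_add_distrib, ← Finset.mul_sum, hw₁1, hw₂1, hab]
  have hsum : ∑ t ∈ S, μ t • t = s := by
    have hcm : S.centerMass μ id = s := by
      rw [← Finset.centerMass_segment S w₁ w₂ id hw₁1 hw₂1 a b hab, hw₁c, hw₂c]
      exact habs
    rw [Finset.centerMass_eq_of_sum_1 _ _ hμ1] at hcm
    simpa using hcm
  by_cases hμs : μ s = 1
  · exfalso
    have hz0 : ∑ t ∈ S.erase s, μ t = 0 := by
      have h2 := Finset.add_sum_erase S μ hs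
      rw [hμ1, hμs] at h2
      linarith
    have hz : ∀ t ∈ S.erase s, μ t = 0 :=
      (Finset.sum_eq_zero_iff_of_nonneg
        (fun t ht => hμ0 t (Finset.mem_of_mem_erase ht))).1 hz0
    have hw1z : ∀ t ∈ S.erase s, w₁ t = 0 := by
      intro t ht
      have h3 : a * w₁ t + b * w₂ t = 0 := hz t ht
      have h4 := hw₁0 t (Finset.mem_of_mem_erase ht)
      have h5 := hw₂0 t (Finset.mem_of_mem_erase ht)
      nlinarith
    have hw2z : ∀ t ∈ S.erase s, w₂ t = 0 := by
      intro t ht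
      have h3 : a * w₁ t + b * w₂ t = 0 := hz t ht
      have h4 := hw₁0 t (Finset.mem_of_mem_erase ht)
      have h5 := hw₂0 t (Finset.mem_of_mem_erase ht)
      nlinarith
    have hx1s : x₁ = s := by
      have hw1s : w₁ s = 1 := by
        have h2 := Finset.add_sum_erase S w₁ hs
        rw [hw₁1, Finset.sum_eq_zero hw1z] at h2
        linarith
      rw [Finset.centerMass_eq_of_sum_1 _ _ hw₁1] at hw₁c
      rw [← hw₁c, ← Finset.add_sum_erase S (fun t => w₁ t • id t) hs]
      rw [Finset.sum_eq_zero (fun t ht => by rw [hw1z t ht, zero_smul]), hw1s]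
      simp
    have hx2s : x₂ = s := by
      have hw2s : w₂ s = 1 := by
        have h2 := Finset.add_sum_erase S w₂ hs
        rw [hw₂1, Finset.sum_eq_zero hw2z] at h2
        linarith
      rw [Finset.centerMass_eq_of_sum_1 _ _ hw₂1] at hw₂c
      rw [← hw₂c, ← Finset.add_sum_erase S (fun t => w₂ t • id t) hs]
      rw [Finset.sum_eq_zero (fun t ht => by rw [hw2z t ht, zero_smul]), hw2s]
      simp
    exact hx12 hx1s hx2s
  · have hμsle : μ s ≤ 1 := hμ1 ▸ Finset.single_le_sum hμ0 hs
    have hc : 0 < 1 - μ s := lt_of_le_of_ne (by linarith) (by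
      intro h; exact hμs (by linarith [h]))
    have hsumerase : ∑ t ∈ S.erase s, μ t = 1 - μ s := by
      have h2 := Finset.add_sum_erase S μ hs
      rw [hμ1] at h2; linarith
    have hvsum : ∑ t ∈ S.erase s, μ t • t = (1 - μ s) • s := by
      have h2 := Finset.add_sum_erase S (fun t => μ t • t) hs
      rw [hsum] at h2
      rw [sub_smul, one_smul]
      exact eq_sub_of_add_eq' h2
    have hmem := Finset.centerMass_id_mem_convexHull (S.erase s)
      (w := μ) (fun t ht => hμ0 t (Finset.mem_of_mem_erase ht))
      (by rw [hsumerase]; exact hc)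
    have heq : (S.erase s).centerMass μ id = s := by
      rw [Finset.centerMass, hsumerase]
      simp only [id_eq]
      rw [hvsum, inv_smul_smul₀ hc.ne']
    rwa [heq] at hmem

theorem convexHull_eq_hull_extremePoints {n : ℕ} (S : Finset (Fin n → ℚ)) :
    convexHull ℚ (S : Set (Fin n → ℚ)) =
      convexHull ℚ ((convexHull ℚ (S : Set (Fin n → ℚ))).extremePoints ℚ) := by
  classical
  induction S using Finset.strongInduction with
  | _ S ih =>
    by_cases hall : ∀ s ∈ S, s ∈ (convexHull ℚ (S : Set (Fin n → ℚ))).extremePoints ℚ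
    · apply le_antisymm
      · exact convexHull_min (fun s hs => subset_convexHull ℚ _ (hall s hs))
          (convex_convexHull ℚ _)
      · exact convexHull_min extremePoints_subset (convex_convexHull ℚ _)
    · push_neg at hall
      obtain ⟨s, hsS, hsne⟩ := hall
      have hkey := mem_convexHull_erase hsS hsne
      have hEq : convexHull ℚ ((S.erase s : Finset (Fin n → ℚ)) : Set (Fin n → ℚ)) =
          convexHull ℚ (S : Set (Fin n → ℚ)) := by
        apply le_antisymm
        · exact convexHull_mono (by exact_mod_cast Finset.erase_subset s S)
        · refine convexHull_min ?_ (convex_convexHull ℚ _)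
          intro t ht
          rcases eq_or_ne t s with rfl | h
          · exact hkey
          · exact subset_convexHull ℚ _
              (Finset.mem_coe.2 (Finset.mem_erase.2 ⟨h, Finset.mem_coe.1 ht⟩))
      rw [← hEq]
      exact ih (S.erase s) (Finset.erase_ssubset hsS)

theorem exists_extreme_min {n : ℕ} (S : Finset (Fin n → ℚ)) (hS : S.Nonempty) (u : Fin n → ℚ) :
    ∃ e ∈ (convexHull ℚ (S : Set (Fin n → ℚ))).extremePoints ℚ,
      ∀ x ∈ convexHull ℚ (S : Set (Fin n → ℚ)), dpair u e ≤ dpair u x := by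
  classical
  have hC := convexHull_eq_hull_extremePoints S
  set A := convexHull ℚ (S : Set (Fin n → ℚ)) with hA
  set EP := S.filter (fun x => x ∈ A.extremePoints ℚ) with hEP
  have hEPset : (EP : Set (Fin n → ℚ)) = A.extremePoints ℚ := by
    ext x
    simp only [hEP, Finset.coe_filter, Set.mem_setOf_eq, Finset.mem_coe]
    exact ⟨fun h => h.2, fun h => ⟨Finset.mem_coe.1 (extremePoints_convexHull_subset h), h⟩⟩
  have hEPne : EP.Nonempty := by
    by_contra h
    rw [Finset.not_nonempty_iff_eq_empty] at h
    have h2 : A.extremePoints ℚ = (∅ : Set (Fin n → ℚ)) := by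
      rw [← hEPset, h]; simp
    rw [h2, convexHull_empty] at hC
    obtain ⟨x, hx⟩ := hS
    exact Set.notMem_empty x (hC ▸ subset_convexHull ℚ _ (Finset.mem_coe.2 hx))
  obtain ⟨e, heEP, hemin⟩ := EP.exists_min_image (dpair u) hEPne
  refine ⟨e, ?_, ?_⟩
  · rw [← hEPset]; exact Finset.mem_coe.2 heEP
  · intro x hx
    have hx' : x ∈ convexHull ℚ (A.extremePoints ℚ) := hC ▸ hx
    rw [← hEPset] at hx'
    exact hull_le (fun y hy => hemin y (Finset.mem_coe.1 hy)) hx'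

/-- The piecewise-linear map `u ↦ u - u_min • w`, where `u_min` is the minimum of `⟨u,·⟩`
over (the vertices of) the factor `F`, maps the dual polytope `P*` bijectively onto the
dual polytope `Q*` of the mutation `Q = mut_w(P,F)`. -/
theorem mutation_dual_bijection {n : ℕ} (w : Fin n → ℤ) (P F : Set (Fin n → ℚ))
    (G : ℤ → Set (Fin n → ℚ)) (hP : IsLatticePolytope P)
    (h0 : (0 : Fin n → ℚ) ∈ interior P) (hw : IsPrimitive w)
    (hdata : IsMutData w P F G) :
    ∃ m : (Fin n → ℚ) → ℚ,
      (∀ u, ∃ vF ∈ F.extremePoints ℚ, dpair u vF = m u) ∧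
      (∀ u, ∀ vF ∈ F, m u ≤ dpair u vF) ∧
      Set.BijOn (fun u => u - m u • fun i => (w i : ℚ)) (dualP P)
        (dualP (mutation w P F G)) := by
  classical
  obtain ⟨SP, hSPlat, hPeq⟩ := hP
  obtain ⟨⟨SF, hSFlat, hFeq⟩, hFne, hFw, hG⟩ := hdata
  have hSFne : SF.Nonempty := by
    obtain ⟨x, hx⟩ := hFne
    rw [hFeq] at hx
    rcases SF.eq_empty_or_nonempty with h | h
    · rw [h] at hx; simp at hx
    · exact h
  choose e he hemin using fun u => exists_extreme_min SF hSFne u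
  set W : Fin n → ℚ := fun i => (w i : ℚ) with hWdef
  set m : (Fin n → ℚ) → ℚ := fun u => dpair u (e u) with hm
  have heF : ∀ u, e u ∈ F.extremePoints ℚ := by
    intro u; rw [hFeq]; exact he u
  have heF' : ∀ u, e u ∈ F := fun u => extremePoints_subset (heF u)
  have hmle : ∀ u, ∀ v ∈ F, m u ≤ dpair u v := by
    intro u v hv
    rw [hFeq] at hv
    exact hemin u v hv
  -- linearity w.r.t. shifting by multiples of W, on F
  have hshift : ∀ (u : Fin n → ℚ) (c : ℚ) (v : Fin n → ℚ), v ∈ F →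
      dpair (u - c • W) v = dpair u v := by
    intro u c v hv
    rw [dpair_sub_smul, ← pairing_eq_dpair, hFw v hv, mul_zero, sub_zero]
  have hminv : ∀ (u : Fin n → ℚ) (c : ℚ), m (u - c • W) = m u := by
    intro u c
    apply le_antisymm
    · calc m (u - c • W) ≤ dpair (u - c • W) (e u) := hmle _ _ (heF' u)
        _ = dpair u (e u) := hshift u c _ (heF' u)
        _ = m u := rfl
    · calc m u ≤ dpair u (e (u - c • W)) := hmle u _ (heF' _)
        _ = dpair (u - c • W) (e (u - c • W)) := (hshift u c _ (heF' _)).symm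
        _ = m (u - c • W) := rfl
  -- geometry facts
  have hPconv : Convex ℚ P := by rw [hPeq]; exact convex_convexHull ℚ _
  have hsliceP : ∀ h : ℤ, wSlice w h P ⊆ P := fun h =>
    convexHull_min (fun x hx => hx.1) hPconv
  have hslicepair : ∀ (h : ℤ) (x : Fin n → ℚ), x ∈ wSlice w h P → pairing w x = (h : ℚ) :=
    fun h x hx => hull_pairing_eq (fun y hy => hy.2.2) hx
  refine ⟨m, fun u => ⟨e u, heF u, rfl⟩, hmle, ?_, ?_, ?_⟩
  · -- MapsTo
    intro u hu
    intro y hy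
    have hy' : y ∈ convexHull ℚ ((⋃ h : ℤ, ⋃ _ : h < 0, G h) ∪
        ⋃ h : ℤ, ⋃ _ : 0 ≤ h, (wSlice w h P + (h : ℚ) • F)) := hy
    refine hull_le ?_ hy'
    rintro z (hz | hz)
    · simp only [Set.mem_iUnion] at hz
      obtain ⟨h, hneg, hzG⟩ := hz
      obtain ⟨-, -, hsub2⟩ := hG h hneg
      have hzz : z + (-(h : ℚ)) • e u ∈ wSlice w h P :=
        hsub2 (Set.add_mem_add hzG (Set.smul_mem_smul_set (heF' u)))
      have hzP : z + (-(h : ℚ)) • e u ∈ P := hsliceP h hzz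
      have hpz : pairing w (z + (-(h : ℚ)) • e u) = (h : ℚ) := hslicepair h _ hzz
      have hpf : pairing w (e u) = 0 := hFw _ (heF' u)
      rw [pairing_add_smul, hpf, mul_zero, add_zero] at hpz
      have hdu : -1 ≤ dpair u (z + (-(h : ℚ)) • e u) := hu _ hzP
      rw [dpair_add_smul_right] at hdu
      rw [dpair_sub_smul, ← pairing_eq_dpair, hpz]
      have hme : dpair u (e u) = m u := rfl
      linarith [hdu, hme]
    · simp only [Set.mem_iUnion] at hz
      obtain ⟨h, hpos, hz⟩ := hz
      rw [Set.mem_add] at hz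
      obtain ⟨x, hx, v, hv, rfl⟩ := hz
      obtain ⟨f, hf, rfl⟩ := hv
      have hpx : pairing w x = (h : ℚ) := hslicepair h _ hx
      have hxP : x ∈ P := hsliceP h hx
      have hpf : pairing w f = 0 := hFw f hf
      have h1 : -1 ≤ dpair u x := hu x hxP
      have h2 : m u ≤ dpair u f := hmle u f hf
      have hh : (0 : ℚ) ≤ (h : ℚ) := by exact_mod_cast hpos
      rw [dpair_sub_smul, ← pairing_eq_dpair, dpair_add_smul_right,
        pairing_add_smul, hpx, hpf, mul_zero, add_zero]
      nlinarith [mul_nonneg hh (sub_nonneg.2 h2)]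
  · -- InjOn
    intro u₁ h₁ u₂ h₂ heq
    have heq' : u₁ - m u₁ • W = u₂ - m u₂ • W := heq
    have hc : u₁ = u₂ - (m u₂ - m u₁) • W := by
      rw [sub_smul, show u₂ - (m u₂ • W - m u₁ • W) = (u₂ - m u₂ • W) + m u₁ • W by abel,
        ← heq']
      abel
    have hmeq : m u₁ = m u₂ := by
      have h3 := hminv u₂ (m u₂ - m u₁)
      rw [← hc] at h3
      exact h3
    rw [hc, hmeq, sub_self, zero_smul, sub_zero]
  · -- SurjOn
    intro u' hu'
    refine ⟨u' - (-(m u')) • W, ?_, ?_⟩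
    · -- u' + m u' • W ∈ dualP P
      intro p hp
      have hp' : p ∈ convexHull ℚ ((convexHull ℚ (SP : Set (Fin n → ℚ))).extremePoints ℚ) := by
        rw [← convexHull_eq_hull_extremePoints, ← hPeq]
        exact hp
      refine hull_le ?_ hp'
      intro v hv
      have hvS : v ∈ SP := Finset.mem_coe.1 (extremePoints_convexHull_subset hv)
      have hvlat : IsLatticePt v := hSPlat v hvS
      have hvP : v ∈ P := by rw [hPeq]; exact extremePoints_subset hv
      have hvPext : v ∈ P.extremePoints ℚ := by rw [hPeq]; exact hv
      obtain ⟨z, hz⟩ := Classical.axiom_of_choice hvlat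
      have hpv : pairing w v = ((∑ i, w i * z i : ℤ) : ℚ) := by
        simp only [pairing]
        push_cast
        exact Finset.sum_congr rfl fun i _ => by rw [hz i]
      set hh : ℤ := ∑ i, w i * z i with hhdef
      have hdpv : dpair (u' - (-(m u')) • W) v = dpair u' v + m u' * (hh : ℚ) := by
        rw [dpair_sub_smul, ← pairing_eq_dpair, hpv]
        ring
      rcases le_or_gt 0 hh with hhpos | hhneg
      · have hvslice : v ∈ wSlice w hh P :=
          subset_convexHull ℚ _ ⟨hvP, hvlat, hpv⟩
        have hmemQ : v + (hh : ℚ) • e u' ∈ mutation w P F G := by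
          apply subset_convexHull ℚ _
          refine Or.inr ?_
          simp only [Set.mem_iUnion]
          exact ⟨hh, hhpos, Set.add_mem_add hvslice (Set.smul_mem_smul_set (heF' u'))⟩
        have h1 : -1 ≤ dpair u' (v + (hh : ℚ) • e u') := hu' _ hmemQ
        rw [dpair_add_smul_right] at h1
        have hme : dpair u' (e u') = m u' := rfl
        rw [hdpv]
        linarith [h1, hme]
      · obtain ⟨-, hsub1, -⟩ := hG hh hhneg
        have hvmem : v ∈ G hh + (-(hh : ℚ)) • F := hsub1 ⟨hvPext, hpv⟩
        rw [Set.mem_add] at hvmem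
        obtain ⟨g, hg, fv, hfv, hvsum⟩ := hvmem
        obtain ⟨f₀, hf₀, rfl⟩ := hfv
        have hgQ : g ∈ mutation w P F G := by
          apply subset_convexHull ℚ _
          refine Or.inl ?_
          simp only [Set.mem_iUnion]
          exact ⟨hh, hhneg, hg⟩
        have h1 : -1 ≤ dpair u' g := hu' _ hgQ
        have h2 : m u' ≤ dpair u' f₀ := hmle u' f₀ hf₀
        have h3 : dpair u' v = dpair u' g + (-(hh : ℚ)) * dpair u' f₀ := by
          rw [← hvsum, dpair_add_smul_right]
        have hhq : (hh : ℚ) < 0 := by exact_mod_cast hhneg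
        rw [hdpv, h3]
        nlinarith [mul_nonneg (neg_nonneg.2 hhq.le) (sub_nonneg.2 h2)]
    · -- maps to u'
      show (u' - (-(m u')) • W) - m (u' - (-(m u')) • W) • W = u'
      rw [hminv u' (-(m u'))]
      simp only [neg_smul]
      abel
end
end
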